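/- arXiv:1704.02599 — 2 statements merged into one kernel-verified Lean document; each statement's English description precedes it below -/
import Mathlib

section
/- Let Ω ⊂ ℝ^n be a smooth bounded domain, s ∈ (0,1), and p : Ω̄ × Ω̄ → (1,∞) a bounded variable exponent with p_- > 1. For any t ∈ (0,s) and r ∈ (1, p_-), the space W^{s,p(·,·)}(Ω) embeds continuously into the constant-exponent fractional Sobolev space W^{t,r}(Ω): there is a constant C = C(p_-, p_+, r, s, t, n, Ω) with ‖f‖_{L^r(Ω)} ≤ C‖f‖_{L^{p̄(·)}(Ω)} and [f]_{t,r} ≤ C[f]_{s,p(·,·)}. -/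
open MeasureTheory Set Filter Topology
open scoped ENNReal NNReal

noncomputable section

/-- Euclidean space ℝⁿ. -/
abbrev En (n : ℕ) : Type := EuclideanSpace ℝ (Fin n)

/-- The modular ∫ (|f|/λ)^{p(x)} dμ of a variable exponent Lebesgue space. -/
def vmodular {α : Type*} [MeasurableSpace α] (μ : Measure α)
    (p : α → ℝ) (f : α → ℝ) (l : ℝ) : ℝ≥0∞ :=
  ∫⁻ x, ENNReal.ofReal ((|f x| / l) ^ (p x)) ∂μ

/-- The Luxemburg norm of the variable exponent Lebesgue space L^{p(·)}(A,μ). -/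
def luxNorm {α : Type*} [MeasurableSpace α] (μ : Measure α) (p f : α → ℝ) : ℝ :=
  sInf {l : ℝ | 0 < l ∧ vmodular μ p f l ≤ 1}

/-- Membership in the variable exponent Lebesgue space L^{p(·)}(A,μ). -/
def MemVLp {α : Type*} [MeasurableSpace α] (μ : Measure α) (p f : α → ℝ) : Prop :=
  ∃ l : ℝ, 0 < l ∧ vmodular μ p f l < ⊤

/-- The variable-exponent Gagliardo modular with (possibly variable) fractional order s. -/
def gModular (n : ℕ) (s p : En n × En n → ℝ) (D : Set (En n)) (f : En n → ℝ) (l : ℝ) : ℝ≥0∞ :=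
  ∫⁻ x in D, ∫⁻ y in D, ENNReal.ofReal
    (|f x - f y| ^ p (x, y) / (l ^ p (x, y) * ‖x - y‖ ^ ((n : ℝ) + s (x, y) * p (x, y))))

/-- The variable-exponent Gagliardo (Luxemburg-type) seminorm [f]_{s,p(·,·)}(D). -/
def gSemiNorm (n : ℕ) (s p : En n × En n → ℝ) (D : Set (En n)) (f : En n → ℝ) : ℝ :=
  sInf {l : ℝ | 0 < l ∧ gModular n s p D f l ≤ 1}

/-- Membership in the variable exponent fractional Sobolev space W^{s,p(·,·)}(D). -/
def MemWsp (n : ℕ) (s p : En n × En n → ℝ) (D : Set (En n)) (f : En n → ℝ) : Prop :=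
  MemVLp (volume.restrict D) (fun x => p (x, x)) f ∧
    ∃ l : ℝ, 0 < l ∧ gModular n s p D f l < ⊤

/-- The full norm on W^{s,p(·,·)}(D) (constant fractional order s). -/
def wNorm (n : ℕ) (s : ℝ) (p : En n × En n → ℝ) (D : Set (En n)) (f : En n → ℝ) : ℝ :=
  luxNorm (volume.restrict D) (fun x => p (x, x)) f + gSemiNorm n (fun _ => s) p D f

/-- The constant-exponent Gagliardo seminorm [f]_{t,r}(D). -/
def cGagliardo (n : ℕ) (t r : ℝ) (D : Set (En n)) (f : En n → ℝ) : ℝ :=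
  (∫⁻ x in D, ∫⁻ y in D,
    ENNReal.ofReal (|f x - f y| ^ r / ‖x - y‖ ^ ((n : ℝ) + t * r))).toReal ^ (1 / r)

/-- The constant exponent Lebesgue "norm" (∫ |f|^r dμ)^{1/r}. -/
def cLpNorm {α : Type*} [MeasurableSpace α] (μ : Measure α) (r : ℝ) (f : α → ℝ) : ℝ :=
  (∫⁻ x, ENNReal.ofReal (|f x| ^ r) ∂μ).toReal ^ (1 / r)

/-- The boundary measure: (n-1)-dimensional Hausdorff measure restricted to ∂Ω. -/
def bdryMeasure (n : ℕ) (Ω : Set (En n)) : Measure (En n) :=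
  (μH[(n : ℝ) - 1]).restrict (frontier Ω)


section Helpers
open Metric

lemma kernelBall_lt_top (n : ℕ) {ε R : ℝ} (hε : 0 < ε) (hR : 0 < R) :
    ∫⁻ y in Metric.ball (0 : En n) R, ENNReal.ofReal (‖y‖ ^ (ε - n)) < ⊤ := by
  set e := ε - (n : ℝ) with he_def
  rcases le_or_gt 0 e with he | he
  · calc ∫⁻ y in Metric.ball (0 : En n) R, ENNReal.ofReal (‖y‖ ^ e)
        ≤ ∫⁻ _ in Metric.ball (0 : En n) R, ENNReal.ofReal ((max R 1) ^ e) := by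
          refine setLIntegral_mono' measurableSet_ball fun y hy => ?_
          exact ENNReal.ofReal_le_ofReal (Real.rpow_le_rpow (norm_nonneg y)
            (le_trans (le_of_lt (mem_ball_zero_iff.mp hy)) (le_max_left R 1)) he)
      _ = ENNReal.ofReal ((max R 1) ^ e) * volume (Metric.ball (0 : En n) R) := by
          rw [setLIntegral_const]
      _ < ⊤ := ENNReal.mul_lt_top ENNReal.ofReal_lt_top measure_ball_lt_top
  · have hmeas : Measurable fun y : En n => ‖y‖ ^ e :=
      by fun_prop
    rw [lintegral_eq_lintegral_meas_le _
      (Eventually.of_forall fun y => Real.rpow_nonneg (norm_nonneg y) e) hmeas.aemeasurable]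
    set μ := volume.restrict (Metric.ball (0 : En n) R)
    have hsub : ∀ t : ℝ, 0 < t →
        {a : En n | t ≤ ‖a‖ ^ e} ⊆ Metric.closedBall 0 (t ^ e⁻¹) := by
      intro t htp a ha
      simp only [mem_setOf_eq] at ha
      have ha0 : a ≠ 0 := by
        rintro rfl
        rw [norm_zero, Real.zero_rpow (ne_of_lt he)] at ha; linarith
      have hna : 0 < ‖a‖ := norm_pos_iff.mpr ha0
      have h1 : (‖a‖ ^ e) ^ e⁻¹ ≤ t ^ e⁻¹ :=
        Real.rpow_le_rpow_of_nonpos htp ha (inv_nonpos.mpr he.le)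
      rwa [Real.rpow_rpow_inv hna.le (ne_of_lt he), mem_closedBall_zero_iff] at *
    have key : ∀ t : ℝ, t ∈ Ioi (1:ℝ) →
        μ {a : En n | t ≤ ‖a‖ ^ e} ≤
          ENNReal.ofReal (t ^ (e⁻¹ * n)) * volume (Metric.ball (0 : En n) 1) := by
      intro t ht1
      have htp : (0:ℝ) < t := lt_trans zero_lt_one ht1
      calc μ {a : En n | t ≤ ‖a‖ ^ e}
          ≤ volume {a : En n | t ≤ ‖a‖ ^ e} := Measure.restrict_le_self _
        _ ≤ volume (Metric.closedBall (0 : En n) (t ^ e⁻¹)) :=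
            measure_mono (hsub t htp)
        _ = ENNReal.ofReal ((t ^ e⁻¹) ^ Module.finrank ℝ (En n)) * volume (Metric.ball (0 : En n) 1) :=
            Measure.addHaar_closedBall _ _ (Real.rpow_nonneg htp.le _)
        _ = ENNReal.ofReal (t ^ (e⁻¹ * n)) * volume (Metric.ball (0 : En n) 1) := by
            rw [finrank_euclideanSpace_fin, ← Real.rpow_natCast (t ^ e⁻¹) n,
              ← Real.rpow_mul htp.le]
    calc ∫⁻ t in Ioi (0:ℝ), μ {a : En n | t ≤ ‖a‖ ^ e}
        ≤ ∫⁻ t in Ioc 0 1 ∪ Ioi 1, μ {a : En n | t ≤ ‖a‖ ^ e} :=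
          lintegral_mono_set Ioi_subset_Ioc_union_Ioi
      _ ≤ (∫⁻ t in Ioc (0:ℝ) 1, μ {a : En n | t ≤ ‖a‖ ^ e}) +
            ∫⁻ t in Ioi (1:ℝ), μ {a : En n | t ≤ ‖a‖ ^ e} := lintegral_union_le _ _ _
      _ < ⊤ := by
          refine ENNReal.add_lt_top.2 ⟨?_, ?_⟩
          · calc (∫⁻ t in Ioc (0:ℝ) 1, μ {a : En n | t ≤ ‖a‖ ^ e})
                ≤ ∫⁻ _ in Ioc (0:ℝ) 1, volume (Metric.ball (0 : En n) R) :=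
                  lintegral_mono fun t => by
                    calc μ {a : En n | t ≤ ‖a‖ ^ e} ≤ μ univ := measure_mono (subset_univ _)
                      _ = volume (Metric.ball (0 : En n) R) := by
                          simp [μ, Measure.restrict_apply_univ]
              _ = volume (Metric.ball (0 : En n) R) * volume (Ioc (0:ℝ) 1) :=
                  setLIntegral_const _ _
              _ < ⊤ := ENNReal.mul_lt_top measure_ball_lt_top (by simp)
          · have ha : e⁻¹ * n < -1 := by
              rw [inv_mul_eq_div, div_lt_iff_of_neg he]
              simp only [he_def]; linarith
            calc (∫⁻ t in Ioi (1:ℝ), μ {a : En n | t ≤ ‖a‖ ^ e})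
                ≤ ∫⁻ t in Ioi (1:ℝ),
                    ENNReal.ofReal (t ^ (e⁻¹ * n)) * volume (Metric.ball (0 : En n) 1) :=
                  setLIntegral_mono' measurableSet_Ioi key
              _ = (∫⁻ t in Ioi (1:ℝ), ENNReal.ofReal (t ^ (e⁻¹ * n))) *
                    volume (Metric.ball (0 : En n) 1) :=
                  lintegral_mul_const' _ _ measure_ball_lt_top.ne
              _ < ⊤ := ENNReal.mul_lt_top
                  ((integrableOn_Ioi_rpow_of_lt ha zero_lt_one).setLIntegral_lt_top)
                  measure_ball_lt_top


/-- Translation change of variables for the kernel integral. -/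
lemma shift_kernel (n : ℕ) (x : En n) (R e : ℝ) :
    ∫⁻ y in Metric.ball x R, ENNReal.ofReal (‖x - y‖ ^ e) =
      ∫⁻ z in Metric.ball (0 : En n) R, ENNReal.ofReal (‖z‖ ^ e) := by
  have hmp : MeasurePreserving (fun y : En n => y + (-x)) volume volume :=
    measurePreserving_add_right volume (-x)
  have hemb : MeasurableEmbedding (fun y : En n => y + (-x)) :=
    (MeasurableEquiv.addRight (-x)).measurableEmbedding
  have hpre : (fun y : En n => y + (-x)) ⁻¹' Metric.ball (0 : En n) R = Metric.ball x R := by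
    ext y
    simp [Metric.mem_ball, dist_eq_norm, ← sub_eq_add_neg]
  have := hmp.setLIntegral_comp_preimage_emb hemb
    (fun z => ENNReal.ofReal (‖z‖ ^ e)) (Metric.ball (0 : En n) R)
  rw [hpre] at this
  rw [← this]
  refine setLIntegral_congr_fun measurableSet_ball (fun y _ => ?_)
  rw [← sub_eq_add_neg, norm_sub_rev]

/-- Scaling trick: from finiteness of a modular, find a level where it is `≤ 1`. -/
lemma exists_modular_le_one {Φ : ℝ → ℝ≥0∞} {pm : ℝ} (hpm : 0 < pm)
    (hscale : ∀ l lam : ℝ, 0 < l → 1 ≤ lam → Φ (lam * l) ≤ ENNReal.ofReal (lam ^ (-pm)) * Φ l)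
    {l₀ : ℝ} (hl₀ : 0 < l₀) (hfin : Φ l₀ < ⊤) : ∃ l, 0 < l ∧ Φ l ≤ 1 := by
  set M := (Φ l₀).toReal with hM
  have hM0 : 0 ≤ M := ENNReal.toReal_nonneg
  set lam := max 1 ((M + 1) ^ pm⁻¹) with hlam
  have hlam1 : (1:ℝ) ≤ lam := le_max_left _ _
  have hlam0 : (0:ℝ) < lam := lt_of_lt_of_le zero_lt_one hlam1
  refine ⟨lam * l₀, by positivity, ?_⟩
  refine le_trans (hscale _ _ hl₀ hlam1) ?_
  have hpow : M + 1 ≤ lam ^ pm := by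
    have h1 : ((M + 1) ^ pm⁻¹) ^ pm ≤ lam ^ pm :=
      Real.rpow_le_rpow (Real.rpow_nonneg (by linarith) _) (le_max_right _ _) hpm.le
    rwa [← Real.rpow_mul (by linarith : (0:ℝ) ≤ M + 1), inv_mul_cancel₀ hpm.ne',
      Real.rpow_one] at h1
  have hneg : lam ^ (-pm) ≤ (M + 1)⁻¹ := by
    rw [Real.rpow_neg hlam0.le]
    exact inv_anti₀ (by linarith) hpow
  calc ENNReal.ofReal (lam ^ (-pm)) * Φ l₀
      = ENNReal.ofReal (lam ^ (-pm)) * ENNReal.ofReal M := by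
        rw [hM, ENNReal.ofReal_toReal hfin.ne]
    _ = ENNReal.ofReal (lam ^ (-pm) * M) := by
        rw [ENNReal.ofReal_mul (Real.rpow_nonneg hlam0.le _)]
    _ ≤ ENNReal.ofReal ((M + 1)⁻¹ * M) :=
        ENNReal.ofReal_le_ofReal (mul_le_mul_of_nonneg_right hneg hM0)
    _ ≤ 1 := by
        rw [← ENNReal.ofReal_one]
        refine ENNReal.ofReal_le_ofReal ?_
        rw [← div_eq_inv_mul, div_le_one (by linarith)]
        linarith

/-- Main pointwise estimate. -/
lemma main_pointwise {a l d D q r s t nn : ℝ} (ha : 0 ≤ a) (hl : 0 < l)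
    (hd : 0 ≤ d) (hdD : d ≤ D) (hrq : r ≤ q) (hrpos : 0 < r) (hts : t ≤ s)
    (htpos : 0 < t) (hnn : 0 ≤ nn) :
    a ^ r / d ^ (nn + t * r) ≤
      l ^ r * D ^ ((s - t) * r) * (a ^ q / (l ^ q * d ^ (nn + s * q))) +
        l ^ r * d ^ ((s - t) * r - nn) := by
  have hD : 0 ≤ D := hd.trans hdD
  rcases eq_or_lt_of_le hd with hd0 | hdpos
  · have h0 : a ^ r / d ^ (nn + t * r) = 0 := by
      rw [← hd0, Real.zero_rpow (by positivity : (0:ℝ) < nn + t * r).ne', div_zero]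
    rw [h0]
    exact add_nonneg
      (mul_nonneg (mul_nonneg (Real.rpow_nonneg hl.le _) (Real.rpow_nonneg hD _))
        (div_nonneg (Real.rpow_nonneg ha _)
          (mul_nonneg (Real.rpow_nonneg hl.le _) (Real.rpow_nonneg hd _))))
      (mul_nonneg (Real.rpow_nonneg hl.le _) (Real.rpow_nonneg hd _))
  rcases le_or_gt a (l * d ^ s) with hle | hgt
  · have h1 : a ^ r ≤ (l * d ^ s) ^ r := Real.rpow_le_rpow ha hle hrpos.le
    have h2 : (l * d ^ s) ^ r / d ^ (nn + t * r) = l ^ r * d ^ ((s - t) * r - nn) := by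
      rw [Real.mul_rpow hl.le (Real.rpow_nonneg hd _), ← Real.rpow_mul hd,
        mul_div_assoc, ← Real.rpow_sub hdpos]
      congr 1
      ring
    calc a ^ r / d ^ (nn + t * r) ≤ (l * d ^ s) ^ r / d ^ (nn + t * r) := by gcongr
      _ = l ^ r * d ^ ((s - t) * r - nn) := h2
      _ ≤ _ := le_add_of_nonneg_left (by positivity)
  · have hlds : (0:ℝ) < l * d ^ s := mul_pos hl (Real.rpow_pos_of_pos hdpos s)
    have hapos : 0 < a := lt_trans hlds hgt
    have key : a ^ r ≤ a ^ q * (l * d ^ s) ^ (r - q) := by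
      have h1 : a ^ r = a ^ q * a ^ (r - q) := by
        rw [← Real.rpow_add hapos]; ring_nf
      rw [h1]
      exact mul_le_mul_of_nonneg_left
        (Real.rpow_le_rpow_of_nonpos hlds hgt.le (sub_nonpos.mpr hrq))
        (Real.rpow_nonneg ha q)
    have h2 : (l * d ^ s) ^ (r - q) = l ^ (r - q) * d ^ (s * (r - q)) := by
      rw [Real.mul_rpow hl.le (Real.rpow_nonneg hd _), ← Real.rpow_mul hd]
    have h3 : a ^ q * (l ^ (r - q) * d ^ (s * (r - q))) / d ^ (nn + t * r) =
        a ^ q * l ^ (r - q) * (d ^ ((s - t) * r) / d ^ (nn + s * q)) := by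
      have hexp : s * (r - q) - (nn + t * r) = (s - t) * r - (nn + s * q) := by ring
      rw [show a ^ q * (l ^ (r - q) * d ^ (s * (r - q))) =
          a ^ q * l ^ (r - q) * d ^ (s * (r - q)) from by ring,
        mul_div_assoc, ← Real.rpow_sub hdpos, hexp, Real.rpow_sub hdpos]
    have h4 : d ^ ((s - t) * r) ≤ D ^ ((s - t) * r) :=
      Real.rpow_le_rpow hd hdD (by nlinarith)
    have h5 : a ^ q * l ^ (r - q) * (D ^ ((s - t) * r) / d ^ (nn + s * q)) =
        l ^ r * D ^ ((s - t) * r) * (a ^ q / (l ^ q * d ^ (nn + s * q))) := by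
      rw [Real.rpow_sub hl]
      have hlq : l ^ q ≠ 0 := (Real.rpow_pos_of_pos hl q).ne'
      have hdq : d ^ (nn + s * q) ≠ 0 := (Real.rpow_pos_of_pos hdpos _).ne'
      field_simp
    calc a ^ r / d ^ (nn + t * r)
        ≤ a ^ q * (l * d ^ s) ^ (r - q) / d ^ (nn + t * r) := by gcongr
      _ = a ^ q * (l ^ (r - q) * d ^ (s * (r - q))) / d ^ (nn + t * r) := by rw [h2]
      _ = a ^ q * l ^ (r - q) * (d ^ ((s - t) * r) / d ^ (nn + s * q)) := h3
      _ ≤ a ^ q * l ^ (r - q) * (D ^ ((s - t) * r) / d ^ (nn + s * q)) := by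
          gcongr
      _ = l ^ r * D ^ ((s - t) * r) * (a ^ q / (l ^ q * d ^ (nn + s * q))) := h5
      _ ≤ _ := le_add_of_nonneg_right (by positivity)

end Helpers

/-- continuous embedding W^{s,p(·,·)}(Ω) ↪ W^{t,r}(Ω) for t∈(0,s), r∈(1,p₋). -/
theorem stmt2 (n : ℕ) (Ω : Set (En n)) (hΩo : IsOpen Ω) (hΩb : Bornology.IsBounded Ω)
    (s t r pm pM : ℝ) (hs : s ∈ Set.Ioo (0 : ℝ) 1)
    (p : En n × En n → ℝ) (hpc : ContinuousOn p (closure Ω ×ˢ closure Ω))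
    (hpm : 1 < pm) (hpb : ∀ z ∈ closure Ω ×ˢ closure Ω, pm ≤ p z ∧ p z ≤ pM)
    (ht : t ∈ Set.Ioo 0 s) (hr : r ∈ Set.Ioo 1 pm) :
    ∃ C > (0 : ℝ), ∀ f : En n → ℝ, MemWsp n (fun _ => s) p Ω f →
      cLpNorm (volume.restrict Ω) r f ≤
          C * luxNorm (volume.restrict Ω) (fun x => p (x, x)) f ∧
      cGagliardo n t r Ω f ≤ C * gSemiNorm n (fun _ => s) p Ω f := by
  obtain ⟨hs0, hs1⟩ := hs
  obtain ⟨ht0, hts⟩ := ht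
  obtain ⟨hr1, hrpm⟩ := hr
  have hrpos : (0:ℝ) < r := lt_trans zero_lt_one hr1
  have hnn : (0:ℝ) ≤ (n : ℝ) := Nat.cast_nonneg n
  have hε : (0:ℝ) < (s - t) * r := mul_pos (by linarith) hrpos
  have hD1 : (1:ℝ) ≤ Metric.diam Ω + 1 := by
    have := Metric.diam_nonneg (s := Ω); linarith
  set D : ℝ := Metric.diam Ω + 1 with hD_def
  have hD0 : (0:ℝ) < D := by linarith
  have hΩm : MeasurableSet Ω := hΩo.measurableSet
  have hvolΩ : volume Ω < ⊤ := hΩb.measure_lt_top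
  set κ : ℝ≥0∞ :=
    ∫⁻ z in Metric.ball (0 : En n) D, ENNReal.ofReal (‖z‖ ^ ((s - t) * r - n)) with hκ_def
  have hκ : κ < ⊤ := kernelBall_lt_top n hε hD0
  have hker : ∀ x ∈ Ω,
      (∫⁻ y in Ω, ENNReal.ofReal (‖x - y‖ ^ ((s - t) * r - n))) ≤ κ := by
    intro x hx
    have hsubset : Ω ⊆ Metric.ball x D := fun y hy =>
      Metric.mem_ball.mpr (lt_of_le_of_lt (Metric.dist_le_diam_of_mem hΩb hy hx)
        (by rw [hD_def]; linarith))
    calc ∫⁻ y in Ω, ENNReal.ofReal (‖x - y‖ ^ ((s - t) * r - n))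
        ≤ ∫⁻ y in Metric.ball x D, ENNReal.ofReal (‖x - y‖ ^ ((s - t) * r - n)) :=
          lintegral_mono_set hsubset
      _ = κ := shift_kernel n x D ((s - t) * r - n)
  set C₁ : ℝ := ((volume Ω).toReal + 1) ^ (1/r) with hC₁_def
  set C₂ : ℝ := (D ^ ((s - t) * r) + (κ * volume Ω).toReal) ^ (1/r) with hC₂_def
  have hC₁ : 0 < C₁ := Real.rpow_pos_of_pos (by positivity) _
  have hC₂ : 0 < C₂ := by
    have : (0:ℝ) < D ^ ((s - t) * r) := Real.rpow_pos_of_pos hD0 _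
    exact Real.rpow_pos_of_pos (by positivity) _
  have hC : (0:ℝ) < max C₁ C₂ := lt_max_of_lt_left hC₁
  have keyInf : ∀ (S : Set ℝ) (v Cv : ℝ), 0 < Cv → Cv ≤ max C₁ C₂ → S.Nonempty →
      (∀ l ∈ S, 0 < l → v ≤ Cv * l) → (∀ l ∈ S, 0 < l) → v ≤ max C₁ C₂ * sInf S := by
    intro S v Cv hCv hCle hne hb hpos
    have h1 : v / max C₁ C₂ ≤ sInf S := by
      refine le_csInf hne fun l hl => ?_
      rw [div_le_iff₀ hC]
      calc v ≤ Cv * l := hb l hl (hpos l hl)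
        _ ≤ max C₁ C₂ * l := mul_le_mul_of_nonneg_right hCle (hpos l hl).le
        _ = l * max C₁ C₂ := mul_comm _ _
    calc v = v / max C₁ C₂ * max C₁ C₂ := by field_simp
      _ ≤ sInf S * max C₁ C₂ := mul_le_mul_of_nonneg_right h1 hC.le
      _ = max C₁ C₂ * sInf S := mul_comm _ _
  refine ⟨max C₁ C₂, hC, ?_⟩
  intro f hf
  obtain ⟨hfL, hfG⟩ := hf
  have hpmpos : (0:ℝ) < pm := lt_trans zero_lt_one hpm
  -- scaling property for vmodular
  have hscale₁ : ∀ l lam : ℝ, 0 < l → 1 ≤ lam →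
      vmodular (volume.restrict Ω) (fun x => p (x, x)) f (lam * l) ≤
        ENNReal.ofReal (lam ^ (-pm)) *
          vmodular (volume.restrict Ω) (fun x => p (x, x)) f l := by
    intro l lam hl hlam
    have hlam0 : (0:ℝ) < lam := lt_of_lt_of_le zero_lt_one hlam
    simp only [vmodular]
    rw [← lintegral_const_mul' _ _ ENNReal.ofReal_ne_top]
    refine lintegral_mono_ae ((ae_restrict_iff' hΩm).mpr (ae_of_all _ fun x hx => ?_))
    have hq : pm ≤ p (x, x) :=
      (hpb (x, x) (mk_mem_prod (subset_closure hx) (subset_closure hx))).1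
    have step : (|f x| / (lam * l)) ^ p (x, x) ≤ lam ^ (-pm) * (|f x| / l) ^ p (x, x) := by
      have e1 : |f x| / (lam * l) = (|f x| / l) / lam := by
        rw [div_div, mul_comm]
      rw [e1, Real.div_rpow (by positivity) hlam0.le, div_eq_mul_inv,
        ← Real.rpow_neg hlam0.le, mul_comm]
      exact mul_le_mul_of_nonneg_right
        (Real.rpow_le_rpow_of_exponent_le hlam (neg_le_neg hq))
        (Real.rpow_nonneg (by positivity) _)
    calc ENNReal.ofReal ((|f x| / (lam * l)) ^ p (x, x))
        ≤ ENNReal.ofReal (lam ^ (-pm) * (|f x| / l) ^ p (x, x)) :=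
          ENNReal.ofReal_le_ofReal step
      _ = ENNReal.ofReal (lam ^ (-pm)) * ENNReal.ofReal ((|f x| / l) ^ p (x, x)) :=
          ENNReal.ofReal_mul (Real.rpow_nonneg hlam0.le _)
  -- scaling property for gModular
  have hscale₂ : ∀ l lam : ℝ, 0 < l → 1 ≤ lam →
      gModular n (fun _ => s) p Ω f (lam * l) ≤
        ENNReal.ofReal (lam ^ (-pm)) * gModular n (fun _ => s) p Ω f l := by
    intro l lam hl hlam
    have hlam0 : (0:ℝ) < lam := lt_of_lt_of_le zero_lt_one hlam
    simp only [gModular]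
    rw [← lintegral_const_mul' _ _ ENNReal.ofReal_ne_top]
    refine lintegral_mono_ae ((ae_restrict_iff' hΩm).mpr (ae_of_all _ fun x hx => ?_))
    rw [← lintegral_const_mul' _ _ ENNReal.ofReal_ne_top]
    refine lintegral_mono_ae ((ae_restrict_iff' hΩm).mpr (ae_of_all _ fun y hy => ?_))
    have hq : pm ≤ p (x, y) :=
      (hpb (x, y) (mk_mem_prod (subset_closure hx) (subset_closure hy))).1
    have e1 : |f x - f y| ^ p (x, y) /
          ((lam * l) ^ p (x, y) * ‖x - y‖ ^ ((n:ℝ) + s * p (x, y))) =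
        lam ^ (-p (x, y)) *
          (|f x - f y| ^ p (x, y) / (l ^ p (x, y) * ‖x - y‖ ^ ((n:ℝ) + s * p (x, y)))) := by
      rw [Real.mul_rpow hlam0.le hl.le, mul_assoc, div_mul_eq_div_div_swap,
        div_eq_mul_inv, Real.rpow_neg hlam0.le, mul_comm]
    have step : |f x - f y| ^ p (x, y) /
          ((lam * l) ^ p (x, y) * ‖x - y‖ ^ ((n:ℝ) + s * p (x, y))) ≤
        lam ^ (-pm) *
          (|f x - f y| ^ p (x, y) / (l ^ p (x, y) * ‖x - y‖ ^ ((n:ℝ) + s * p (x, y)))) := by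
      rw [e1]
      exact mul_le_mul_of_nonneg_right
        (Real.rpow_le_rpow_of_exponent_le hlam (neg_le_neg hq))
        (by positivity)
    calc ENNReal.ofReal (|f x - f y| ^ p (x, y) /
          ((lam * l) ^ p (x, y) * ‖x - y‖ ^ ((n:ℝ) + s * p (x, y))))
        ≤ ENNReal.ofReal (lam ^ (-pm) *
            (|f x - f y| ^ p (x, y) / (l ^ p (x, y) * ‖x - y‖ ^ ((n:ℝ) + s * p (x, y))))) :=
          ENNReal.ofReal_le_ofReal step
      _ = ENNReal.ofReal (lam ^ (-pm)) * ENNReal.ofReal (|f x - f y| ^ p (x, y) /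
            (l ^ p (x, y) * ‖x - y‖ ^ ((n:ℝ) + s * p (x, y)))) :=
          ENNReal.ofReal_mul (Real.rpow_nonneg hlam0.le _)
  constructor
  · -- Lᵖ part
    obtain ⟨l₀, hl₀, hfin⟩ := hfL
    have hne : {l : ℝ | 0 < l ∧
        vmodular (volume.restrict Ω) (fun x => p (x, x)) f l ≤ 1}.Nonempty :=
      exists_modular_le_one hpmpos hscale₁ hl₀ hfin
    unfold luxNorm
    refine keyInf _ _ C₁ hC₁ (le_max_left _ _) hne ?_ (fun l hl => hl.1)
    rintro l ⟨-, hmod⟩ hl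
    have hint : (∫⁻ x, ENNReal.ofReal (|f x| ^ r) ∂volume.restrict Ω) ≤
        ENNReal.ofReal (l ^ r) * (volume Ω + 1) := by
      have hpt : ∀ x ∈ Ω, ENNReal.ofReal (|f x| ^ r) ≤
          ENNReal.ofReal (l ^ r) * (1 + ENNReal.ofReal ((|f x| / l) ^ p (x, x))) := by
        intro x hx
        have hq : pm ≤ p (x, x) :=
          (hpb (x, x) (mk_mem_prod (subset_closure hx) (subset_closure hx))).1
        have hreal : |f x| ^ r ≤ l ^ r * (1 + (|f x| / l) ^ p (x, x)) := by
          have e : |f x| ^ r = (|f x| / l) ^ r * l ^ r := by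
            rw [← Real.mul_rpow (by positivity) hl.le, div_mul_cancel₀ _ hl.ne']
          rw [e, mul_comm]
          refine mul_le_mul_of_nonneg_left ?_ (Real.rpow_nonneg hl.le _)
          rcases le_or_gt (|f x| / l) 1 with hu | hu
          · exact le_trans (Real.rpow_le_one (by positivity) hu hrpos.le)
              (le_add_of_nonneg_right (Real.rpow_nonneg (by positivity) _))
          · exact le_trans (Real.rpow_le_rpow_of_exponent_le hu.le
              (le_trans hrpm.le hq)) (le_add_of_nonneg_left zero_le_one)
        calc ENNReal.ofReal (|f x| ^ r)
            ≤ ENNReal.ofReal (l ^ r * (1 + (|f x| / l) ^ p (x, x))) :=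
              ENNReal.ofReal_le_ofReal hreal
          _ = ENNReal.ofReal (l ^ r) * (1 + ENNReal.ofReal ((|f x| / l) ^ p (x, x))) := by
              rw [ENNReal.ofReal_mul (Real.rpow_nonneg hl.le _),
                ENNReal.ofReal_add zero_le_one (Real.rpow_nonneg (by positivity) _),
                ENNReal.ofReal_one]
      calc (∫⁻ x, ENNReal.ofReal (|f x| ^ r) ∂volume.restrict Ω)
          ≤ ∫⁻ x in Ω, ENNReal.ofReal (l ^ r) *
              (1 + ENNReal.ofReal ((|f x| / l) ^ p (x, x))) :=
            setLIntegral_mono' hΩm hpt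
        _ = ENNReal.ofReal (l ^ r) *
              ∫⁻ x in Ω, (1 + ENNReal.ofReal ((|f x| / l) ^ p (x, x))) :=
            lintegral_const_mul' _ _ ENNReal.ofReal_ne_top
        _ = ENNReal.ofReal (l ^ r) *
              (volume Ω + ∫⁻ x in Ω, ENNReal.ofReal ((|f x| / l) ^ p (x, x))) := by
            rw [lintegral_add_left measurable_const, lintegral_one,
              Measure.restrict_apply_univ]
        _ ≤ ENNReal.ofReal (l ^ r) * (volume Ω + 1) := by
            gcongr
            exact hmod
    have h1 : (∫⁻ x, ENNReal.ofReal (|f x| ^ r) ∂volume.restrict Ω).toReal ≤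
        l ^ r * ((volume Ω).toReal + 1) := by
      have hRne : ENNReal.ofReal (l ^ r) * (volume Ω + 1) ≠ ⊤ :=
        ENNReal.mul_ne_top ENNReal.ofReal_ne_top
          (by simp [hvolΩ.ne, ENNReal.add_eq_top])
      refine le_trans (ENNReal.toReal_mono hRne hint) ?_
      rw [ENNReal.toReal_mul, ENNReal.toReal_ofReal (Real.rpow_nonneg hl.le _),
        ENNReal.toReal_add hvolΩ.ne ENNReal.one_ne_top, ENNReal.toReal_one]
    calc cLpNorm (volume.restrict Ω) r f
        = (∫⁻ x, ENNReal.ofReal (|f x| ^ r) ∂volume.restrict Ω).toReal ^ (1/r) := rfl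
      _ ≤ (l ^ r * ((volume Ω).toReal + 1)) ^ (1/r) :=
          Real.rpow_le_rpow ENNReal.toReal_nonneg h1 (by positivity)
      _ = C₁ * l := by
          rw [Real.mul_rpow (Real.rpow_nonneg hl.le _) (by positivity),
            ← Real.rpow_mul hl.le, mul_one_div, div_self hrpos.ne', Real.rpow_one,
            hC₁_def, mul_comm]
  · -- Gagliardo part
    obtain ⟨l₀, hl₀, hfin⟩ := hfG
    have hne : {l : ℝ | 0 < l ∧ gModular n (fun _ => s) p Ω f l ≤ 1}.Nonempty :=
      exists_modular_le_one hpmpos hscale₂ hl₀ hfin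
    unfold gSemiNorm
    refine keyInf _ _ C₂ hC₂ (le_max_right _ _) hne ?_ (fun l hl => hl.1)
    rintro l ⟨-, hmod⟩ hl
    set c1 : ℝ≥0∞ := ENNReal.ofReal (l ^ r * D ^ ((s - t) * r)) with hc1
    set c2 : ℝ≥0∞ := ENNReal.ofReal (l ^ r) with hc2
    have hKk_meas : Measurable
        (fun z : En n × En n => ENNReal.ofReal (‖z.1 - z.2‖ ^ ((s - t) * r - n))) := by
      fun_prop
    have hk_meas : Measurable
        (fun x => ∫⁻ y in Ω, ENNReal.ofReal (‖x - y‖ ^ ((s - t) * r - n))) :=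
      Measurable.lintegral_prod_right' hKk_meas
    have hpt : ∀ x ∈ Ω, ∀ y ∈ Ω,
        ENNReal.ofReal (|f x - f y| ^ r / ‖x - y‖ ^ ((n : ℝ) + t * r)) ≤
          c1 * ENNReal.ofReal (|f x - f y| ^ p (x, y) /
              (l ^ p (x, y) * ‖x - y‖ ^ ((n:ℝ) + s * p (x, y)))) +
            c2 * ENNReal.ofReal (‖x - y‖ ^ ((s - t) * r - n)) := by
      intro x hx y hy
      have hq : pm ≤ p (x, y) :=
        (hpb (x, y) (mk_mem_prod (subset_closure hx) (subset_closure hy))).1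
      have hdD : ‖x - y‖ ≤ D := by
        have h := Metric.dist_le_diam_of_mem hΩb hx hy
        rw [dist_eq_norm] at h
        rw [hD_def]; linarith
      have hmain := main_pointwise (abs_nonneg (f x - f y)) hl (norm_nonneg (x - y)) hdD
        (le_trans hrpm.le hq) hrpos hts.le ht0 hnn
      calc ENNReal.ofReal (|f x - f y| ^ r / ‖x - y‖ ^ ((n : ℝ) + t * r))
          ≤ ENNReal.ofReal (l ^ r * D ^ ((s - t) * r) *
              (|f x - f y| ^ p (x, y) / (l ^ p (x, y) * ‖x - y‖ ^ ((n:ℝ) + s * p (x, y)))) +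
              l ^ r * ‖x - y‖ ^ ((s - t) * r - n)) := ENNReal.ofReal_le_ofReal hmain
        _ = _ := by
            rw [ENNReal.ofReal_add
                (mul_nonneg (mul_nonneg (Real.rpow_nonneg hl.le _)
                  (Real.rpow_nonneg hD0.le _))
                  (div_nonneg (Real.rpow_nonneg (abs_nonneg _) _)
                    (mul_nonneg (Real.rpow_nonneg hl.le _)
                      (Real.rpow_nonneg (norm_nonneg _) _))))
                (mul_nonneg (Real.rpow_nonneg hl.le _)
                  (Real.rpow_nonneg (norm_nonneg _) _))]
            congr 1
            · rw [ENNReal.ofReal_mul (mul_nonneg (Real.rpow_nonneg hl.le _)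
                (Real.rpow_nonneg hD0.le _))]
            · rw [ENNReal.ofReal_mul (Real.rpow_nonneg hl.le _)]
    have hinner : ∀ x ∈ Ω,
        (∫⁻ y in Ω, ENNReal.ofReal (|f x - f y| ^ r / ‖x - y‖ ^ ((n : ℝ) + t * r))) ≤
          c1 * (∫⁻ y in Ω, ENNReal.ofReal (|f x - f y| ^ p (x, y) /
              (l ^ p (x, y) * ‖x - y‖ ^ ((n:ℝ) + s * p (x, y))))) +
            c2 * (∫⁻ y in Ω, ENNReal.ofReal (‖x - y‖ ^ ((s - t) * r - n))) := by
      intro x hx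
      calc (∫⁻ y in Ω, ENNReal.ofReal (|f x - f y| ^ r / ‖x - y‖ ^ ((n : ℝ) + t * r)))
          ≤ ∫⁻ y in Ω, (c1 * ENNReal.ofReal (|f x - f y| ^ p (x, y) /
              (l ^ p (x, y) * ‖x - y‖ ^ ((n:ℝ) + s * p (x, y)))) +
              c2 * ENNReal.ofReal (‖x - y‖ ^ ((s - t) * r - n))) :=
            setLIntegral_mono' hΩm (hpt x hx)
        _ = (∫⁻ y in Ω, c1 * ENNReal.ofReal (|f x - f y| ^ p (x, y) /
              (l ^ p (x, y) * ‖x - y‖ ^ ((n:ℝ) + s * p (x, y))))) +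
            ∫⁻ y in Ω, c2 * ENNReal.ofReal (‖x - y‖ ^ ((s - t) * r - n)) :=
            lintegral_add_right _ (by fun_prop)
        _ = _ := by
            rw [lintegral_const_mul' c1 _ ENNReal.ofReal_ne_top,
              lintegral_const_mul' c2 _ ENNReal.ofReal_ne_top]
    have houter : (∫⁻ x in Ω, ∫⁻ y in Ω,
        ENNReal.ofReal (|f x - f y| ^ r / ‖x - y‖ ^ ((n : ℝ) + t * r))) ≤
          c1 * 1 + c2 * (κ * volume Ω) := by
      calc (∫⁻ x in Ω, ∫⁻ y in Ω,
          ENNReal.ofReal (|f x - f y| ^ r / ‖x - y‖ ^ ((n : ℝ) + t * r)))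
          ≤ ∫⁻ x in Ω, (c1 * (∫⁻ y in Ω, ENNReal.ofReal (|f x - f y| ^ p (x, y) /
              (l ^ p (x, y) * ‖x - y‖ ^ ((n:ℝ) + s * p (x, y))))) +
              c2 * (∫⁻ y in Ω, ENNReal.ofReal (‖x - y‖ ^ ((s - t) * r - n)))) :=
            setLIntegral_mono' hΩm hinner
        _ = (∫⁻ x in Ω, c1 * (∫⁻ y in Ω, ENNReal.ofReal (|f x - f y| ^ p (x, y) /
              (l ^ p (x, y) * ‖x - y‖ ^ ((n:ℝ) + s * p (x, y)))))) +
            ∫⁻ x in Ω, c2 * (∫⁻ y in Ω, ENNReal.ofReal (‖x - y‖ ^ ((s - t) * r - n))) :=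
            lintegral_add_right _ (hk_meas.const_mul _)
        _ = c1 * (∫⁻ x in Ω, ∫⁻ y in Ω, ENNReal.ofReal (|f x - f y| ^ p (x, y) /
              (l ^ p (x, y) * ‖x - y‖ ^ ((n:ℝ) + s * p (x, y))))) +
            c2 * (∫⁻ x in Ω, ∫⁻ y in Ω, ENNReal.ofReal (‖x - y‖ ^ ((s - t) * r - n))) := by
            rw [lintegral_const_mul' c1 _ ENNReal.ofReal_ne_top,
              lintegral_const_mul' c2 _ ENNReal.ofReal_ne_top]
        _ ≤ c1 * 1 + c2 * (κ * volume Ω) := by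
            gcongr
            · exact hmod
            · calc (∫⁻ x in Ω, ∫⁻ y in Ω, ENNReal.ofReal (‖x - y‖ ^ ((s - t) * r - n)))
                  ≤ ∫⁻ _ in Ω, κ := setLIntegral_mono' hΩm hker
                _ = κ * volume Ω := setLIntegral_const _ _
    have hRne : c1 * 1 + c2 * (κ * volume Ω) ≠ ⊤ := by
      refine ENNReal.add_ne_top.mpr ⟨?_, ?_⟩
      · exact ENNReal.mul_ne_top ENNReal.ofReal_ne_top ENNReal.one_ne_top
      · exact ENNReal.mul_ne_top ENNReal.ofReal_ne_top
          (ENNReal.mul_ne_top hκ.ne hvolΩ.ne)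
    have h1 : (∫⁻ x in Ω, ∫⁻ y in Ω,
        ENNReal.ofReal (|f x - f y| ^ r / ‖x - y‖ ^ ((n : ℝ) + t * r))).toReal ≤
        l ^ r * (D ^ ((s - t) * r) + (κ * volume Ω).toReal) := by
      refine le_trans (ENNReal.toReal_mono hRne houter) ?_
      rw [ENNReal.toReal_add (ENNReal.mul_ne_top ENNReal.ofReal_ne_top ENNReal.one_ne_top)
          (ENNReal.mul_ne_top ENNReal.ofReal_ne_top (ENNReal.mul_ne_top hκ.ne hvolΩ.ne)),
        ENNReal.toReal_mul, ENNReal.toReal_mul, ENNReal.toReal_one,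
        ENNReal.toReal_ofReal (mul_nonneg (Real.rpow_nonneg hl.le _)
          (Real.rpow_nonneg hD0.le _)),
        ENNReal.toReal_ofReal (Real.rpow_nonneg hl.le _)]
      refine le_of_eq ?_
      ring
    calc cGagliardo n t r Ω f
        = (∫⁻ x in Ω, ∫⁻ y in Ω,
            ENNReal.ofReal (|f x - f y| ^ r / ‖x - y‖ ^ ((n : ℝ) + t * r))).toReal ^ (1/r) := rfl
      _ ≤ (l ^ r * (D ^ ((s - t) * r) + (κ * volume Ω).toReal)) ^ (1/r) := by
          refine Real.rpow_le_rpow ENNReal.toReal_nonneg h1 (by positivity)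
      _ = C₂ * l := by
          have hDε : (0:ℝ) < D ^ ((s - t) * r) := Real.rpow_pos_of_pos hD0 _
          rw [Real.mul_rpow (Real.rpow_nonneg hl.le _) (by positivity),
            ← Real.rpow_mul hl.le, mul_one_div, div_self hrpos.ne', Real.rpow_one,
            hC₂_def, mul_comm]
end
end

section
/- Let E be a measure space of finite measure with measure μ, and q a bounded variable exponent on E, and let Q be a constant with Q > q(x) for a.e. x ∈ E. Then there is a constant C (depending on μ(E), q, Q) such that ‖f‖_{L^{q(·)}(E, μ)} ≤ C ‖f‖_{L^Q(E, μ)} for all f ∈ L^Q(E, μ). That is, constant-exponent L^Q embeds into variable-exponent L^{q(·)} on finite measure spaces when Q dominates q. -/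
open MeasureTheory Set Filter Topology
open scoped ENNReal NNReal

noncomputable section

/-- Pointwise key inequality: t^q ≤ δ^(1-Q) t^Q + δ for 1 ≤ q ≤ Q, 0 < δ ≤ 1. -/
lemma stmt7_aux_pt (t δ q Q : ℝ) (ht : 0 ≤ t) (hδ0 : 0 < δ) (hδ1 : δ ≤ 1)
    (hq1 : 1 ≤ q) (hqQ : q ≤ Q) :
    t ^ q ≤ δ ^ (1 - Q) * t ^ Q + δ := by
  rcases le_or_gt δ t with h | h
  · have ht0 : 0 < t := lt_of_lt_of_le hδ0 h
    have hsplit : t ^ q = t ^ Q * t ^ (q - Q) := by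
      rw [← Real.rpow_add ht0]; ring_nf
    have h1 : t ^ (q - Q) ≤ δ ^ (q - Q) :=
      Real.rpow_le_rpow_of_nonpos hδ0 h (by linarith)
    have h2 : δ ^ (q - Q) ≤ δ ^ (1 - Q) :=
      Real.rpow_le_rpow_of_exponent_ge hδ0 hδ1 (by linarith)
    have h3 : t ^ Q * t ^ (q - Q) ≤ t ^ Q * δ ^ (1 - Q) :=
      mul_le_mul_of_nonneg_left (h1.trans h2) (Real.rpow_nonneg ht Q)
    rw [hsplit]
    nlinarith [h3]
  · have h1 : t ^ q ≤ δ ^ q := Real.rpow_le_rpow ht h.le (by linarith)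
    have h2 : δ ^ q ≤ δ := by
      calc δ ^ q ≤ δ ^ (1 : ℝ) := Real.rpow_le_rpow_of_exponent_ge hδ0 hδ1 hq1
        _ = δ := Real.rpow_one δ
    have h3 : 0 ≤ δ ^ (1 - Q) * t ^ Q :=
      mul_nonneg (Real.rpow_nonneg hδ0.le _) (Real.rpow_nonneg ht _)
    linarith

/-- on a finite measure space, L^Q embeds into L^{q(·)} when Q > q a.e. -/
theorem stmt7 {α : Type*} [MeasurableSpace α] (μ : Measure α) [IsFiniteMeasure μ]
    (q : α → ℝ) (Q : ℝ) (hq1 : ∀ᵐ x ∂μ, 1 ≤ q x) (hqb : ∃ C : ℝ, ∀ᵐ x ∂μ, q x ≤ C)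
    (hQ : ∀ᵐ x ∂μ, q x < Q) :
    ∃ C > (0 : ℝ), ∀ f : α → ℝ, (∫⁻ x, ENNReal.ofReal (|f x| ^ Q) ∂μ) < ⊤ →
      luxNorm μ q f ≤ C * cLpNorm μ Q f := by
  by_cases hμ : μ = 0
  · refine ⟨1, one_pos, fun f _ => ?_⟩
    have hS : {l : ℝ | 0 < l ∧ vmodular μ q f l ≤ 1} = Set.Ioi 0 := by
      ext l
      simp [vmodular, hμ]
    have hlux : luxNorm μ q f = 0 := by
      rw [luxNorm, hS, csInf_Ioi]
    rw [hlux, one_mul]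
    unfold cLpNorm
    positivity
  · have hne : (MeasureTheory.ae μ).NeBot := ae_neBot.mpr hμ
    have hQ1 : 1 < Q := by
      obtain ⟨x, hx1, hx2⟩ := (hq1.and hQ).exists
      linarith
    have hQ0 : 0 < Q := by linarith
    set M : ℝ := (μ Set.univ).toReal with hM
    have hM0 : 0 ≤ M := ENNReal.toReal_nonneg
    set δ : ℝ := (2 * M + 2)⁻¹ with hδ
    have hδ0 : 0 < δ := by positivity
    have hδ1 : δ ≤ 1 := by
      rw [hδ]
      rw [inv_le_one_iff₀]
      right; linarith
    have hδM : δ * M ≤ 1 / 2 := by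
      rw [hδ, inv_mul_le_iff₀ (by linarith)]
      nlinarith
    set A : ℝ := δ ^ (1 - Q) with hA
    have hA0 : 0 < A := Real.rpow_pos_of_pos hδ0 _
    set C : ℝ := (2 * A) ^ (1 / Q) + 1 with hC
    have hCb : (2 * A) ^ (1 / Q) ≤ C := by rw [hC]; linarith
    have hC0 : 0 < C := lt_of_le_of_lt' hCb (by positivity) |>.trans_le le_rfl
    have hCQ : 2 * A ≤ C ^ Q := by
      calc 2 * A = ((2 * A) ^ (1 / Q)) ^ Q := by
            rw [← Real.rpow_mul (by positivity), one_div_mul_cancel (ne_of_gt hQ0),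
              Real.rpow_one]
        _ ≤ C ^ Q := Real.rpow_le_rpow (by positivity) hCb hQ0.le
    refine ⟨C, hC0, fun f hf => ?_⟩
    set I : ℝ≥0∞ := ∫⁻ x, ENNReal.ofReal (|f x| ^ Q) ∂μ with hI
    set K : ℝ := cLpNorm μ Q f with hK
    have hK0 : 0 ≤ K := Real.rpow_nonneg ENNReal.toReal_nonneg _
    have hKQ : K ^ Q = I.toReal := by
      rw [hK, cLpNorm, ← Real.rpow_mul ENNReal.toReal_nonneg,
        one_div_mul_cancel (ne_of_gt hQ0), Real.rpow_one]
    -- main claim: every l > C * K is in the Luxemburg set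
    have main : ∀ l : ℝ, C * K < l → vmodular μ q f l ≤ 1 := by
      intro l hl
      have hl0 : 0 < l := lt_of_le_of_lt (by positivity) hl
      -- pointwise a.e. bound
      have hpt : ∀ᵐ x ∂μ, ENNReal.ofReal ((|f x| / l) ^ q x) ≤
          ENNReal.ofReal A * (ENNReal.ofReal (|f x| ^ Q) * ENNReal.ofReal ((1 / l) ^ Q))
            + ENNReal.ofReal δ := by
        filter_upwards [hq1, hQ] with x h1 h2
        have hb := stmt7_aux_pt (|f x| / l) δ (q x) Q (by positivity) hδ0 hδ1 h1 h2.le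
        calc ENNReal.ofReal ((|f x| / l) ^ q x)
            ≤ ENNReal.ofReal (A * (|f x| / l) ^ Q + δ) := ENNReal.ofReal_le_ofReal hb
          _ = ENNReal.ofReal A * (ENNReal.ofReal (|f x| ^ Q) * ENNReal.ofReal ((1 / l) ^ Q))
              + ENNReal.ofReal δ := by
            rw [ENNReal.ofReal_add (by positivity) hδ0.le]
            congr 1
            rw [div_eq_mul_one_div, Real.mul_rpow (abs_nonneg _) (by positivity),
              ENNReal.ofReal_mul hA0.le,
              ENNReal.ofReal_mul (by positivity)]
      have hmain1 : ENNReal.ofReal A * (I * ENNReal.ofReal ((1 / l) ^ Q))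
          ≤ ENNReal.ofReal (1 / 2) := by
        have hIto : I = ENNReal.ofReal I.toReal := (ENNReal.ofReal_toReal hf.ne).symm
        rw [hIto, ← ENNReal.ofReal_mul ENNReal.toReal_nonneg, ← ENNReal.ofReal_mul hA0.le]
        apply ENNReal.ofReal_le_ofReal
        have h1l : (1 / l) ^ Q = (l ^ Q)⁻¹ := by
          rw [one_div, Real.inv_rpow hl0.le]
        rw [h1l, ← hKQ]
        have hlQ : C ^ Q * K ^ Q ≤ l ^ Q := by
          rw [← Real.mul_rpow hC0.le hK0]
          exact Real.rpow_le_rpow (by positivity) hl.le hQ0.le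
        have hKQ0 : 0 ≤ K ^ Q := Real.rpow_nonneg hK0 _
        have hlQ0 : 0 < l ^ Q := Real.rpow_pos_of_pos hl0 _
        rw [← mul_assoc, mul_inv_le_iff₀ hlQ0]
        nlinarith [hCQ, hKQ0, hlQ, hA0]
      have hmain2 : ENNReal.ofReal δ * μ Set.univ ≤ ENNReal.ofReal (1 / 2) := by
        have : μ Set.univ = ENNReal.ofReal M := (ENNReal.ofReal_toReal (measure_ne_top μ _)).symm
        rw [this, ← ENNReal.ofReal_mul hδ0.le]
        exact ENNReal.ofReal_le_ofReal hδM
      calc vmodular μ q f l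
          ≤ ∫⁻ x, (ENNReal.ofReal A *
              (ENNReal.ofReal (|f x| ^ Q) * ENNReal.ofReal ((1 / l) ^ Q))
              + ENNReal.ofReal δ) ∂μ := lintegral_mono_ae hpt
        _ = ENNReal.ofReal A * ((∫⁻ x, ENNReal.ofReal (|f x| ^ Q) ∂μ)
              * ENNReal.ofReal ((1 / l) ^ Q)) + ENNReal.ofReal δ * μ Set.univ := by
            rw [lintegral_add_right _ measurable_const, lintegral_const,
              lintegral_const_mul' _ _ ENNReal.ofReal_ne_top,
              lintegral_mul_const' _ _ ENNReal.ofReal_ne_top]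
        _ ≤ ENNReal.ofReal (1 / 2) + ENNReal.ofReal (1 / 2) := add_le_add hmain1 hmain2
        _ = 1 := by rw [← ENNReal.ofReal_add (by norm_num) (by norm_num)]; norm_num
    -- conclude via sInf
    have hbdd : BddBelow {l : ℝ | 0 < l ∧ vmodular μ q f l ≤ 1} :=
      ⟨0, fun l hl => hl.1.le⟩
    refine le_of_forall_gt_imp_ge_of_dense fun c hc => ?_
    exact csInf_le hbdd ⟨lt_of_le_of_lt (by positivity) hc, main c hc⟩
end
end
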